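/- arXiv:hep-th/9902044 — 4 statements merged into one kernel-verified Lean document; each statement's English description precedes it below -/
import Mathlib

section
/- Define Δ_{r,s}(t) = -(rt+s)²/(8t) + t/8 + 1/8 for t ≠ 0. Given two factorizations (r_1,s_1) ≠ (r_2,s_2) of 2l (with s_i odd, arising from tuples π^1 ≠ π^2 in the factorization 2l = 2^n ∏ p_i^{n_i}), the equation Δ_{r_1,s_1}(t) = Δ_{r_2,s_2}(t) holds if and only if t = ± (1/2^n) ∏_{i=1}^P p_i^{n_i - k_i^1 - k_i^2}. -/
theorem prod_pow_inj' {P : ℕ} (p : Fin P → ℕ) (hp : ∀ i, (p i).Prime)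
    (hinj : Function.Injective p) {k1 k2 : Fin P → ℕ}
    (h : ∏ i, p i ^ k1 i = ∏ i, p i ^ k2 i) : k1 = k2 := by
  funext j
  have key : ∀ k : Fin P → ℕ, (∏ i, p i ^ k i).factorization (p j) = k j := by
    intro k
    rw [Nat.factorization_prod (fun i _ => pow_ne_zero _ (hp i).pos.ne')]
    rw [Finsupp.finset_sum_apply]
    rw [Finset.sum_eq_single j]
    · simp [(hp j).factorization_pow]
    · intro i _ hij
      rw [(hp i).factorization_pow]
      rw [Finsupp.single_apply]
      simp only [ite_eq_right_iff]
      exact fun h' => absurd (hinj h') hij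
    · simp
  have h2 := key k1
  rw [h, key k2] at h2
  exact h2.symm

/-- For two distinct tuples `π¹ ≠ π²`, the conformal weights
`Δ_{r₁,s₁}(t) = Δ_{r₂,s₂}(t)` holds iff
`t = ± (1/2^n) ∏ pᵢ^{nᵢ - kᵢ¹ - kᵢ²}`. -/
theorem stmt_2 (n P : ℕ) (p e : Fin P → ℕ)
    (hn : 1 ≤ n)
    (hp : ∀ i, (p i).Prime) (hodd : ∀ i, Odd (p i))
    (hinj : Function.Injective p)
    (k1 k2 : Fin P → ℕ) (hk1 : ∀ i, k1 i ≤ e i) (hk2 : ∀ i, k2 i ≤ e i)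
    (hne : k1 ≠ k2)
    (t : ℝ) (ht : t ≠ 0) :
    (-(((2 ^ n * ∏ i, p i ^ k1 i : ℕ) : ℝ) * t
        + ((∏ i, p i ^ (e i - k1 i) : ℕ) : ℝ)) ^ 2 / (8 * t) + t / 8 + 1 / 8
      = -(((2 ^ n * ∏ i, p i ^ k2 i : ℕ) : ℝ) * t
        + ((∏ i, p i ^ (e i - k2 i) : ℕ) : ℝ)) ^ 2 / (8 * t) + t / 8 + 1 / 8)
    ↔ (t = ((2 : ℝ) ^ n)⁻¹ * ∏ i, (p i : ℝ) ^ ((e i : ℤ) - k1 i - k2 i)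
      ∨ t = -(((2 : ℝ) ^ n)⁻¹ * ∏ i, (p i : ℝ) ^ ((e i : ℤ) - k1 i - k2 i))) := by
  set T : ℝ := ((2 : ℝ) ^ n)⁻¹ * ∏ i, (p i : ℝ) ^ ((e i : ℤ) - k1 i - k2 i) with hTdef
  set a : ℝ := ((2 ^ n * ∏ i, p i ^ k1 i : ℕ) : ℝ) with hadef
  set b : ℝ := ((2 ^ n * ∏ i, p i ^ k2 i : ℕ) : ℝ) with hbdef
  set c : ℝ := ((∏ i, p i ^ (e i - k1 i) : ℕ) : ℝ) with hcdef
  set d : ℝ := ((∏ i, p i ^ (e i - k2 i) : ℕ) : ℝ) with hddef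
  have hppos : ∀ i, (0 : ℝ) < (p i : ℝ) := fun i => by exact_mod_cast (hp i).pos
  have h2n : ((2 : ℝ) ^ n) ≠ 0 := by positivity
  have hTpos : 0 < T := by
    apply mul_pos (by positivity)
    exact Finset.prod_pos fun i _ => zpow_pos (hppos i) _
  -- key identities: c = b * T, d = a * T
  have hkey : ∀ (u v : Fin P → ℕ), (∀ i, u i ≤ e i) →
      ((∏ i, p i ^ (e i - u i) : ℕ) : ℝ)
        = ((2 ^ n * ∏ i, p i ^ v i : ℕ) : ℝ)
          * (((2 : ℝ) ^ n)⁻¹ * ∏ i, (p i : ℝ) ^ ((e i : ℤ) - u i - v i)) := by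
    intro u v hu
    push_cast
    rw [show ((2:ℝ)^n * ∏ i, (p i:ℝ) ^ v i) * (((2:ℝ)^n)⁻¹ * ∏ i, (p i:ℝ) ^ ((e i : ℤ) - u i - v i))
        = ((2:ℝ)^n * ((2:ℝ)^n)⁻¹) * ((∏ i, (p i:ℝ) ^ v i) * ∏ i, (p i:ℝ) ^ ((e i : ℤ) - u i - v i)) by ring,
      mul_inv_cancel₀ h2n, one_mul, ← Finset.prod_mul_distrib]
    apply Finset.prod_congr rfl
    intro i _
    have hp0 : (p i : ℝ) ≠ 0 := (hppos i).ne'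
    rw [← zpow_natCast (p i : ℝ) (v i), ← zpow_add₀ hp0,
      ← zpow_natCast (p i : ℝ) (e i - u i)]
    congr 1
    have := hu i
    omega
  have hc : c = b * T := by rw [hcdef, hbdef, hTdef]; exact hkey k1 k2 hk1
  have hd : d = a * T := by
    rw [hddef, hadef, hTdef]
    rw [hkey k2 k1 hk2]
    congr 2
    apply Finset.prod_congr rfl
    intro i _
    congr 1
    ring
  -- a ≠ b
  have hab : a ≠ b := by
    rw [hadef, hbdef]
    have : (∏ i, p i ^ k1 i) ≠ ∏ i, p i ^ k2 i :=
      fun h => hne (prod_pow_inj' p hp hinj h)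
    have h2 : (2:ℕ)^n ≠ 0 := by positivity
    exact_mod_cast fun h => this (Nat.eq_of_mul_eq_mul_left (Nat.pos_of_ne_zero h2) (by exact_mod_cast h))
  have hapos : 0 < a := by
    rw [hadef]; push_cast
    exact mul_pos (by positivity) (Finset.prod_pos fun i _ => pow_pos (hppos i) _)
  have hbpos : 0 < b := by
    rw [hbdef]; push_cast
    exact mul_pos (by positivity) (Finset.prod_pos fun i _ => pow_pos (hppos i) _)
  have h8t : (8 : ℝ) * t ≠ 0 := by simpa using ht
  -- reduce to squares
  rw [add_left_inj, add_left_inj, div_eq_div_iff h8t h8t]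
  have habsq : a ^ 2 - b ^ 2 ≠ 0 := by
    intro h
    rcases sq_eq_sq_iff_eq_or_eq_neg.mp (sub_eq_zero.mp h) with h' | h'
    · exact hab h'
    · nlinarith
  constructor
  · intro h
    have hXY : (a * t + c) ^ 2 = (b * t + d) ^ 2 :=
      neg_inj.mp (mul_right_cancel₀ h8t h)
    rw [hc, hd] at hXY
    have expand : (a ^ 2 - b ^ 2) * (t ^ 2 - T ^ 2)
        = (a * t + b * T) ^ 2 - (b * t + a * T) ^ 2 := by ring
    have hfac : (a ^ 2 - b ^ 2) * (t ^ 2 - T ^ 2) = 0 := by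
      rw [expand, hXY, sub_self]
    have ht2 : t ^ 2 = T ^ 2 :=
      sub_eq_zero.mp ((mul_eq_zero.mp hfac).resolve_left habsq)
    exact sq_eq_sq_iff_eq_or_eq_neg.mp ht2
  · intro h
    have ht2 : t ^ 2 = T ^ 2 := by rcases h with h | h <;> rw [h] <;> ring
    have hXY : (a * t + c) ^ 2 = (b * t + d) ^ 2 := by
      rw [hc, hd]
      have expand : (a * t + b * T) ^ 2 - (b * t + a * T) ^ 2
          = (a ^ 2 - b ^ 2) * (t ^ 2 - T ^ 2) := by ring
      have h0 : t ^ 2 - T ^ 2 = 0 := by rw [ht2, sub_self]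
      rw [h0, mul_zero] at expand
      exact sub_eq_zero.mp expand
    rw [hXY]
end

section
/- There is no value of t at which the conformal weights of three pairwise distinct tuples π_1, π_2, π_3 intersect simultaneously: if Δ_{r_{π_1},s_{π_1}}(t) = Δ_{r_{π_2},s_{π_2}}(t) = Δ_{r_{π_3},s_{π_3}}(t) with π_1 ≠ π_2 and π_2 ≠ π_3, then π_1 = π_3. -/
/-!
Writing `Δ_{r,s}(t) = -(rt+s)²/(8t) + t/8 + 1/8`, two weights with `rs = r's' = C` agree at
`t ≠ 0` iff `(rt+s)² = (r't+s')²`; expanding, the cross terms `2Ct` cancel and, when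
`r ≠ r'`, this forces `(r r' t)² = C²`. Hence `Δ_{π₁} = Δ_{π₂} = Δ_{π₃}` gives
`(r₁ r₂ t)² = (r₂ r₃ t)²`, so `r₁ = r₃`, and `r_π` determines `π` by unique factorization.
-/

noncomputable def conformalWeight (r s t : ℝ) : ℝ := -(r * t + s) ^ 2 / (8 * t) + t / 8 + 1 / 8

lemma conformalWeight_eq_iff {r s r' s' t : ℝ} (ht : t ≠ 0) :
    conformalWeight r s t = conformalWeight r' s' t ↔ (r * t + s) ^ 2 = (r' * t + s') ^ 2 := by
  have h8t : (8 : ℝ) * t ≠ 0 := mul_ne_zero (by norm_num) ht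
  simp only [conformalWeight, add_left_inj, neg_div, neg_inj]
  exact div_left_inj' h8t

lemma sq_mul_mul_eq_of_sq_add_eq {r s r' s' t : ℝ} (hrs : r * s = r' * s')
    (hr : r ^ 2 ≠ r' ^ 2) (hsq : (r * t + s) ^ 2 = (r' * t + s') ^ 2) :
    (r * r' * t) ^ 2 = (r * s) ^ 2 := by
  have hfactor : (r ^ 2 - r' ^ 2) * ((r * r' * t) ^ 2 - (r * s) ^ 2) = 0 := by
    linear_combination (r ^ 2 * r' ^ 2) * hsq
      - (r ^ 2 * (r * s + r' * s') + 2 * r ^ 2 * r' ^ 2 * t) * hrs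
  rcases mul_eq_zero.1 hfactor with h | h
  · exact absurd (sub_eq_zero.1 h) hr
  · exact sub_eq_zero.1 h

lemma sq_ne_sq_of_ne {a b : ℝ} (ha : 0 < a) (hb : 0 < b) (hab : a ≠ b) : a ^ 2 ≠ b ^ 2 :=
  fun h => hab ((pow_left_inj₀ ha.le hb.le two_ne_zero).1 h)

lemma eq_of_conformalWeight_eq_eq {r₁ r₂ r₃ s₁ s₂ s₃ t : ℝ}
    (hr₁ : 0 < r₁) (hr₂ : 0 < r₂) (hr₃ : 0 < r₃)
    (hrs₁₂ : r₁ * s₁ = r₂ * s₂) (hrs₂₃ : r₂ * s₂ = r₃ * s₃)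
    (h₁₂ : r₁ ≠ r₂) (h₂₃ : r₂ ≠ r₃) (ht : t ≠ 0)
    (hΔ₁₂ : conformalWeight r₁ s₁ t = conformalWeight r₂ s₂ t)
    (hΔ₂₃ : conformalWeight r₂ s₂ t = conformalWeight r₃ s₃ t) :
    r₁ = r₃ := by
  have hC₁₂ := sq_mul_mul_eq_of_sq_add_eq hrs₁₂ (sq_ne_sq_of_ne hr₁ hr₂ h₁₂)
    ((conformalWeight_eq_iff ht).1 hΔ₁₂)
  have hC₂₃ := sq_mul_mul_eq_of_sq_add_eq hrs₂₃ (sq_ne_sq_of_ne hr₂ hr₃ h₂₃)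
    ((conformalWeight_eq_iff ht).1 hΔ₂₃)
  rw [hrs₁₂] at hC₁₂
  have hsq : r₁ ^ 2 * (r₂ * t) ^ 2 = r₃ ^ 2 * (r₂ * t) ^ 2 := by
    linear_combination hC₁₂ - hC₂₃
  have hr_sq := mul_right_cancel₀ (pow_ne_zero 2 (mul_ne_zero hr₂.ne' ht)) hsq
  exact (pow_left_inj₀ hr₁.le hr₃.le two_ne_zero).1 hr_sq

section PrimePowers

variable {ι : Type*} [Fintype ι] {p : ι → ℕ}

lemma factorization_prod_pow_apply (hp : ∀ i, (p i).Prime) (hinj : Function.Injective p)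
    (k : ι → ℕ) (j : ι) :
    (∏ i, p i ^ k i).factorization (p j) = k j := by
  rw [Nat.factorization_prod fun i _ => pow_ne_zero _ (hp i).ne_zero,
    Finsupp.finsetSum_apply, Finset.sum_eq_single j]
  · simp [(hp j).factorization_pow]
  · intro i _ hij
    simp [(hp i).factorization_pow, hinj.ne hij]
  · exact fun hj => absurd (Finset.mem_univ j) hj

lemma prod_pow_injective (hp : ∀ i, (p i).Prime) (hinj : Function.Injective p) :
    Function.Injective fun k : ι → ℕ => ∏ i, p i ^ k i := by
  intro a b hab
  funext j
  simpa [factorization_prod_pow_apply hp hinj] using congrArg (·.factorization (p j)) hab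

lemma prod_pow_mul_prod_pow_sub {e k : ι → ℕ} (hk : ∀ i, k i ≤ e i) :
    (∏ i, p i ^ k i) * ∏ i, p i ^ (e i - k i) = ∏ i, p i ^ e i := by
  rw [← Finset.prod_mul_distrib]
  exact Finset.prod_congr rfl fun i _ => by rw [← pow_add, Nat.add_sub_cancel' (hk i)]

end PrimePowers

theorem stmt_4_general (n P : ℕ) (p e : Fin P → ℕ)
    (hp : ∀ i, (p i).Prime)
    (hinj : Function.Injective p)
    (k1 k2 k3 : Fin P → ℕ)
    (hk1 : ∀ i, k1 i ≤ e i) (hk2 : ∀ i, k2 i ≤ e i) (hk3 : ∀ i, k3 i ≤ e i)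
    (h12 : k1 ≠ k2) (h23 : k2 ≠ k3)
    (t : ℝ) (ht : t ≠ 0)
    (hΔ12 : -(((2 ^ n * ∏ i, p i ^ k1 i : ℕ) : ℝ) * t
        + ((∏ i, p i ^ (e i - k1 i) : ℕ) : ℝ)) ^ 2 / (8 * t) + t / 8 + 1 / 8
      = -(((2 ^ n * ∏ i, p i ^ k2 i : ℕ) : ℝ) * t
        + ((∏ i, p i ^ (e i - k2 i) : ℕ) : ℝ)) ^ 2 / (8 * t) + t / 8 + 1 / 8)
    (hΔ23 : -(((2 ^ n * ∏ i, p i ^ k2 i : ℕ) : ℝ) * t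
        + ((∏ i, p i ^ (e i - k2 i) : ℕ) : ℝ)) ^ 2 / (8 * t) + t / 8 + 1 / 8
      = -(((2 ^ n * ∏ i, p i ^ k3 i : ℕ) : ℝ) * t
        + ((∏ i, p i ^ (e i - k3 i) : ℕ) : ℝ)) ^ 2 / (8 * t) + t / 8 + 1 / 8) :
    k1 = k3 := by
  let r : (Fin P → ℕ) → ℕ := fun k => 2 ^ n * ∏ i, p i ^ k i
  let s : (Fin P → ℕ) → ℕ := fun k => ∏ i, p i ^ (e i - k i)
  have r_injective : Function.Injective r := fun a b hab =>
    prod_pow_injective hp hinj (Nat.eq_of_mul_eq_mul_left (by positivity) hab)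
  have r_pos (k : Fin P → ℕ) : (0 : ℝ) < r k :=
    Nat.cast_pos.2 (Nat.mul_pos (by positivity)
      (Finset.prod_pos fun i _ => pow_pos (hp i).pos _))
  have r_mul_s {k : Fin P → ℕ} (hk : ∀ i, k i ≤ e i) :
      ((r k : ℕ) : ℝ) * s k = (2 ^ n * ∏ i, p i ^ e i : ℕ) := by
    rw [← Nat.cast_mul, mul_assoc, prod_pow_mul_prod_pow_sub hk]
  have r_ne {a b : Fin P → ℕ} (hab : a ≠ b) : ((r a : ℕ) : ℝ) ≠ r b :=
    fun h => hab (r_injective (Nat.cast_injective h))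
  refine r_injective (Nat.cast_injective (eq_of_conformalWeight_eq_eq (r_pos k1) (r_pos k2)
    (r_pos k3) ?_ ?_ (r_ne h12) (r_ne h23) ht hΔ12 hΔ23))
  · rw [r_mul_s hk1, r_mul_s hk2]
  · rw [r_mul_s hk2, r_mul_s hk3]

/-- The conformal weights of three pairwise distinct tuples never intersect
simultaneously: if `Δ_{π₁}(t) = Δ_{π₂}(t) = Δ_{π₃}(t)` with `π₁ ≠ π₂` and
`π₂ ≠ π₃`, then `π₁ = π₃`. -/
theorem stmt_4 (n P : ℕ) (p e : Fin P → ℕ)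
    (hn : 1 ≤ n)
    (hp : ∀ i, (p i).Prime) (hodd : ∀ i, Odd (p i))
    (hinj : Function.Injective p)
    (k1 k2 k3 : Fin P → ℕ)
    (hk1 : ∀ i, k1 i ≤ e i) (hk2 : ∀ i, k2 i ≤ e i) (hk3 : ∀ i, k3 i ≤ e i)
    (h12 : k1 ≠ k2) (h23 : k2 ≠ k3)
    (t : ℝ) (ht : t ≠ 0)
    (hΔ12 : -(((2 ^ n * ∏ i, p i ^ k1 i : ℕ) : ℝ) * t
        + ((∏ i, p i ^ (e i - k1 i) : ℕ) : ℝ)) ^ 2 / (8 * t) + t / 8 + 1 / 8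
      = -(((2 ^ n * ∏ i, p i ^ k2 i : ℕ) : ℝ) * t
        + ((∏ i, p i ^ (e i - k2 i) : ℕ) : ℝ)) ^ 2 / (8 * t) + t / 8 + 1 / 8)
    (hΔ23 : -(((2 ^ n * ∏ i, p i ^ k2 i : ℕ) : ℝ) * t
        + ((∏ i, p i ^ (e i - k2 i) : ℕ) : ℝ)) ^ 2 / (8 * t) + t / 8 + 1 / 8
      = -(((2 ^ n * ∏ i, p i ^ k3 i : ℕ) : ℝ) * t
        + ((∏ i, p i ^ (e i - k3 i) : ℕ) : ℝ)) ^ 2 / (8 * t) + t / 8 + 1 / 8) :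
    k1 = k3 :=
  stmt_4_general n P p e hp hinj k1 k2 k3 hk1 hk2 hk3 h12 h23 t ht hΔ12 hΔ23
end

section
/- With c = 3+3t and Δ = Δ_{r,s}(t) = −(rt+s)²/(8t)+t/8+1/8, substituting (a,b) = (rt+s, 4rt) into the map (a,b) ↦ (a(Δ−c/24)−b/2, −2l·a−b) with l = rs/2 gives, at t = s/r, the zero vector (0,0). Hence G_0 annihilates Ψ⁺_{r,s} exactly when t = s/r. -/
/-- With `(a,b) = (rt+s, 4rt)`, `Δ - c/24 = -(rt+s)²/(8t)`, `l = rs/2`, the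
coefficients `(a - b/2, -b(Δ-c/24) - 2la)` of `G₀Ψ⁺_{r,s}` vanish exactly when
`t = s/r`: `G₀` annihilates `Ψ⁺_{r,s}` precisely at `t = s/r`. -/
theorem stmt_13 (r s : ℕ) (hr : 0 < r) (hs : 0 < s) (hsodd : Odd s)
    (t : ℝ) (ht : t ≠ 0) :
    ((((r : ℝ) * t + (s : ℝ)) - (4 * (r : ℝ) * t) / 2 = 0
      ∧ -(4 * (r : ℝ) * t) * (-((r : ℝ) * t + (s : ℝ)) ^ 2 / (8 * t))
          - 2 * ((r : ℝ) * (s : ℝ) / 2) * ((r : ℝ) * t + (s : ℝ)) = 0)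
    ↔ t = (s : ℝ) / (r : ℝ)) := by
  have hr' : (r : ℝ) ≠ 0 := Nat.cast_ne_zero.mpr hr.ne'
  constructor
  · rintro ⟨h1, -⟩
    field_simp
    linarith
  · rintro rfl
    constructor <;> field_simp <;> ring
end

section
/- For (a,b) with not both zero, and Δ_{r,s}(t) as given, the two negative-parity vectors with coefficients (a − b/2, −b(Δ−c/24) − 2la) and (a, b(Δ−c/24)) are proportional if and only if b/a = 4rt/(rt+s) or b/a = 4s/(rt+s) (assuming a ≠ 0; if a = 0 proportionality forces b = 0). -/
/-- The two negative-parity vectors `(a - b/2, -b(Δ-c/24) - 2la)` and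
`(a, b(Δ-c/24))` built from a positive-parity singular operator `(a,b)` are
proportional iff `b/a = 4rt/(rt+s)` or `b/a = 4s/(rt+s)` (for `a ≠ 0`); if
`a = 0`, proportionality forces `b = 0`. -/
theorem stmt_16 (r s : ℕ) (hr : 0 < r) (hs : 0 < s) (hsodd : Odd s)
    (t a b : ℝ) (ht : t ≠ 0) (hrts : (r : ℝ) * t + (s : ℝ) ≠ 0)
    (hab : ¬(a = 0 ∧ b = 0)) :
    (a ≠ 0 →
      ((a - b / 2) * (b * (-((r : ℝ) * t + (s : ℝ)) ^ 2 / (8 * t)))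
          - a * (-b * (-((r : ℝ) * t + (s : ℝ)) ^ 2 / (8 * t))
              - 2 * ((r : ℝ) * (s : ℝ) / 2) * a) = 0
        ↔ b / a = 4 * ((r : ℝ) * t) / ((r : ℝ) * t + (s : ℝ))
          ∨ b / a = 4 * (s : ℝ) / ((r : ℝ) * t + (s : ℝ))))
    ∧ (a = 0 →
      ((a - b / 2) * (b * (-((r : ℝ) * t + (s : ℝ)) ^ 2 / (8 * t)))
          - a * (-b * (-((r : ℝ) * t + (s : ℝ)) ^ 2 / (8 * t))
              - 2 * ((r : ℝ) * (s : ℝ) / 2) * a) = 0 → b = 0)) := by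
  have h16 : (16 * t : ℝ) ≠ 0 := by positivity
  have key : (a - b / 2) * (b * (-((r : ℝ) * t + (s : ℝ)) ^ 2 / (8 * t)))
          - a * (-b * (-((r : ℝ) * t + (s : ℝ)) ^ 2 / (8 * t))
              - 2 * ((r : ℝ) * (s : ℝ) / 2) * a)
      = ((b * ((r : ℝ) * t + (s : ℝ)) - 4 * ((r : ℝ) * t) * a)
          * (b * ((r : ℝ) * t + (s : ℝ)) - 4 * (s : ℝ) * a)) / (16 * t) := by
    field_simp
    ring
  constructor
  · intro ha
    rw [key, div_eq_zero_iff, mul_eq_zero]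
    constructor
    · rintro ((h | h) | h)
      · left
        rw [div_eq_div_iff ha hrts]
        linarith [sub_eq_zero.mp h]
      · right
        rw [div_eq_div_iff ha hrts]
        linarith [sub_eq_zero.mp h]
      · exact absurd h h16
    · rintro (h | h)
      · rw [div_eq_div_iff ha hrts] at h
        left; left; linarith
      · rw [div_eq_div_iff ha hrts] at h
        left; right; linarith
  · intro ha h
    rw [key, div_eq_zero_iff] at h
    rcases h with h | h
    · rcases mul_eq_zero.mp h with h | h <;>
      · rw [ha] at h
        simpa [hrts] using h
    · exact absurd h h16
end
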